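/- arXiv:1601.00044 — 4 statements merged into one kernel-verified Lean document; each statement's English description precedes it below -/
import Mathlib

section
/- If (A,E) is a regular matrix pencil (i.e., A - μE is invertible for some μ ∈ ℂ), and both A - μE and A - νE are invertible, then for any eigenvalue λ of E_μ := (A - μE)⁻¹E, one has 1 + λ(μ - ν) ≠ 0 and λ/(1 + λ(μ - ν)) is an eigenvalue of E_ν := (A - νE)⁻¹E. -/
open Matrix

/-- If (A,E) is a regular matrix pencil with A - μE and A - νE invertible, then for any
eigenvalue l of E_μ := (A - μE)⁻¹E, one has 1 + l(μ - ν) ≠ 0 and l/(1 + l(μ - ν)) is an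
eigenvalue of E_ν := (A - νE)⁻¹E. -/
theorem eigenvalue_transfer {n : ℕ} (A E : Matrix (Fin n) (Fin n) ℂ) (μ ν l : ℂ)
    (hμ : IsUnit (A - μ • E)) (hν : IsUnit (A - ν • E))
    (x : Fin n → ℂ) (hx : x ≠ 0)
    (hev : ((A - μ • E)⁻¹ * E).mulVec x = l • x) :
    1 + l * (μ - ν) ≠ 0 ∧
      ∃ y : Fin n → ℂ, y ≠ 0 ∧
        ((A - ν • E)⁻¹ * E).mulVec y = (l / (1 + l * (μ - ν))) • y := by
  set M := A - μ • E with hM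
  set N := A - ν • E with hN
  have hMdet : IsUnit M.det := (Matrix.isUnit_iff_isUnit_det M).mp hμ
  have hNdet : IsUnit N.det := (Matrix.isUnit_iff_isUnit_det N).mp hν
  have hMM : M * M⁻¹ = 1 := Matrix.mul_nonsing_inv M hMdet
  have hNN : N⁻¹ * N = 1 := Matrix.nonsing_inv_mul N hNdet
  -- E x = l • M x
  have hE : E.mulVec x = l • M.mulVec x := by
    have := congrArg (M.mulVec) hev
    rw [Matrix.mulVec_mulVec, ← mul_assoc, hMM, one_mul, Matrix.mulVec_smul] at this
    exact this
  -- N x = (1 + l(μ-ν)) • M x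
  have hNx : N.mulVec x = (1 + l * (μ - ν)) • M.mulVec x := by
    have : N = M + (μ - ν) • E := by
      rw [hM, hN, sub_smul]; abel
    rw [this, Matrix.add_mulVec, Matrix.smul_mulVec, hE, smul_smul, add_smul, one_smul]
    ring_nf
  have hc : 1 + l * (μ - ν) ≠ 0 := by
    intro h0
    rw [h0, zero_smul] at hNx
    apply hx
    have := congrArg (N⁻¹.mulVec) hNx
    rw [Matrix.mulVec_mulVec, hNN, Matrix.one_mulVec, Matrix.mulVec_zero] at this
    exact this
  refine ⟨hc, x, hx, ?_⟩
  have hMx : M.mulVec x = (1 + l * (μ - ν))⁻¹ • N.mulVec x := by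
    rw [hNx, smul_smul, inv_mul_cancel₀ hc, one_smul]
  rw [← Matrix.mulVec_mulVec, hE, hMx, Matrix.mulVec_smul, Matrix.mulVec_smul,
    Matrix.mulVec_mulVec, hNN, Matrix.one_mulVec, smul_smul, div_eq_mul_inv]
end

section
/- Let N ∈ ℂ^{d×d} be nilpotent with N^d = 0, and let z : ℝ → ℂ^d be differentiable satisfying N z'(t) = (I + μN) z(t) for all t, for some μ ∈ ℂ. Then z(t) = 0 for all t. -/
open Matrix

/-- If N is nilpotent with N^d = 0 and z is differentiable with N z'(t) = (I + μN) z(t)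
for all t, then z ≡ 0. -/
theorem nilpotent_dae_zero {d : ℕ} (N : Matrix (Fin d) (Fin d) ℂ) (μ : ℂ)
    (hN : N ^ d = 0) (z : ℝ → Fin d → ℂ) (hz : Differentiable ℝ z)
    (hode : ∀ t : ℝ, N.mulVec (deriv z t) = z t + μ • N.mulVec (z t)) :
    ∀ t : ℝ, z t = 0 := by
  have hderiv : ∀ (M : Matrix (Fin d) (Fin d) ℂ) (t : ℝ),
      HasDerivAt (fun s => M.mulVec (z s)) (M.mulVec (deriv z t)) t := by
    intro M t
    have h1 : HasDerivAt z (deriv z t) t := (hz t).hasDerivAt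
    let L : (Fin d → ℂ) →L[ℂ] (Fin d → ℂ) :=
      LinearMap.toContinuousLinearMap M.mulVecLin
    exact ((L.restrictScalars ℝ).hasFDerivAt).comp_hasDerivAt t h1
  have main : ∀ j : ℕ, ∀ t : ℝ, (N ^ (d - j)).mulVec (z t) = 0 := by
    intro j
    induction j with
    | zero =>
      intro t
      simp [hN]
    | succ j ih =>
      intro t
      by_cases hj : j < d
      · have hsub : d - j = (d - (j + 1)) + 1 := by omega
        have hz' : (N ^ (d - j)).mulVec (deriv z t) = 0 := by
          have h0 : (fun s => (N ^ (d - j)).mulVec (z s)) = fun _ => (0 : Fin d → ℂ) :=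
            funext ih
          have hd := hderiv (N ^ (d - j)) t
          rw [h0] at hd
          exact hd.unique (hasDerivAt_const t 0)
        have happ := congrArg (fun v => (N ^ (d - (j + 1))).mulVec v) (hode t)
        simp only [Matrix.mulVec_add, Matrix.mulVec_smul, Matrix.mulVec_mulVec] at happ
        rw [← pow_succ, ← hsub] at happ
        rw [hz', ih t, smul_zero, add_zero] at happ
        exact happ.symm
      · have : d - (j + 1) = d - j := by omega
        rw [this]
        exact ih t
  intro t
  have := main d t
  simpa using this
end

section
/- Let N ∈ ℂ^{d×d} be nilpotent and z : ℝ → ℂ^d differentiable with N z'(t) = (I + μN) z(t) for all t. Then for every integer k with 1 ≤ k ≤ d, N^{k-1} z(t) = 0 for all t (by downward induction on powers of N). -/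
open Matrix

lemma mulVec_deriv_zero {d : ℕ} (A : Matrix (Fin d) (Fin d) ℂ) (z : ℝ → Fin d → ℂ)
    (hz : Differentiable ℝ z) (h : ∀ t, A.mulVec (z t) = 0) (t : ℝ) :
    A.mulVec (deriv z t) = 0 := by
  let L : (Fin d → ℂ) →L[ℝ] (Fin d → ℂ) :=
    LinearMap.toContinuousLinearMap ((Matrix.mulVecLin A).restrictScalars ℝ)
  have h1 : HasDerivAt (fun s => L (z s)) (L (deriv z t)) t :=
    L.hasFDerivAt.comp_hasDerivAt t (hz t).hasDerivAt
  have h2 : (fun s => L (z s)) = fun _ => (0 : Fin d → ℂ) := by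
    funext s; simpa [L] using h s
  rw [h2] at h1
  have := (hasDerivAt_const t (0 : Fin d → ℂ)).unique h1
  simpa [L] using this.symm

/-- If N is nilpotent (N^d = 0) and z is differentiable with N z'(t) = (I + μN) z(t) for
all t, then for every 1 ≤ k ≤ d, N^(k-1) z(t) = 0 for all t. -/
theorem nilpotent_dae_powers {d : ℕ} (N : Matrix (Fin d) (Fin d) ℂ) (μ : ℂ)
    (hN : N ^ d = 0) (z : ℝ → Fin d → ℂ) (hz : Differentiable ℝ z)
    (hode : ∀ t : ℝ, N.mulVec (deriv z t) = z t + μ • N.mulVec (z t)) :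
    ∀ k : ℕ, 1 ≤ k → k ≤ d → ∀ t : ℝ, (N ^ (k - 1)).mulVec (z t) = 0 := by
  -- key step: if N^(j+1) z ≡ 0 then N^j z ≡ 0
  have step : ∀ j : ℕ, (∀ t, (N ^ (j + 1)).mulVec (z t) = 0) →
      ∀ t, (N ^ j).mulVec (z t) = 0 := by
    intro j h t
    have hcomp : (N ^ (j + 1)).mulVec (deriv z t) = 0 :=
      mulVec_deriv_zero _ z hz h t
    have := congrArg (fun v => (N ^ j).mulVec v) (hode t)
    simp only [Matrix.mulVec_add, Matrix.mulVec_smul, ← Matrix.mulVec_mulVec] at this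
    rw [Matrix.mulVec_mulVec, ← pow_succ] at this
    rw [hcomp] at this
    have h' := h t
    rw [pow_succ, ← Matrix.mulVec_mulVec] at h'
    rw [h', smul_zero, add_zero] at this
    exact this.symm
  have main : ∀ m : ℕ, ∀ t, (N ^ (d - m)).mulVec (z t) = 0 := by
    intro m
    induction m with
    | zero => intro t; simp [hN]
    | succ m ih =>
      rcases le_or_gt d m with hle | hlt
      · have : d - (m + 1) = d - m := by omega
        rw [this]; exact ih
      · have : d - m = (d - (m + 1)) + 1 := by omega
        rw [this] at ih
        exact step _ ih
  intro k hk1 hkd t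
  have : k - 1 = d - (d - (k - 1)) := by omega
  rw [this]
  exact main _ t
end

section
/- Suppose A - μE and A - νE are invertible, E_μ = Q T Q* is a Schur factorization (Q unitary, T upper triangular), and 1 + (μ-ν)λ ≠ 0 for all diagonal entries λ of T. Then I + (μ-ν)T is invertible and (A - νE)⁻¹ E Q = Q T (I + (μ-ν)T)⁻¹; in particular E_ν := (A - νE)⁻¹E is unitarily similar via the same Q to the upper triangular matrix T(I + (μ-ν)T)⁻¹. -/
open Matrix

/-- If A - μE and A - νE are invertible, E_μ = Q T Q* is a Schur factorization (Q unitary,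
T upper triangular), and 1 + (μ-ν)λ ≠ 0 for all diagonal entries λ of T, then I + (μ-ν)T
is invertible, (A - νE)⁻¹ E Q = Q T (I + (μ-ν)T)⁻¹, and E_ν = (A - νE)⁻¹E is unitarily
similar via the same Q to the upper triangular matrix T(I + (μ-ν)T)⁻¹. -/
theorem schur_basis_shared {n : ℕ} (A E Q T : Matrix (Fin n) (Fin n) ℂ) (μ ν : ℂ)
    (hμ : IsUnit (A - μ • E)) (hν : IsUnit (A - ν • E))
    (hQ : Q ∈ Matrix.unitaryGroup (Fin n) ℂ)
    (hT : T.BlockTriangular id)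
    (hfac : (A - μ • E)⁻¹ * E = Q * T * Qᴴ)
    (hdiag : ∀ i : Fin n, 1 + (μ - ν) * T i i ≠ 0) :
    IsUnit (1 + (μ - ν) • T) ∧
      (A - ν • E)⁻¹ * E * Q = Q * (T * (1 + (μ - ν) • T)⁻¹) ∧
      (A - ν • E)⁻¹ * E = Q * (T * (1 + (μ - ν) • T)⁻¹) * Qᴴ ∧
      (T * (1 + (μ - ν) • T)⁻¹).BlockTriangular id := by
  set c : ℂ := μ - ν with hc
  set S : Matrix (Fin n) (Fin n) ℂ := 1 + c • T with hS
  -- S is block triangular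
  have hSbt : S.BlockTriangular id := fun i j hij => by
    simp [hS, Matrix.add_apply, Matrix.smul_apply, hT hij, hT hij]
    exact Matrix.one_apply_ne (ne_of_gt hij)
  -- S is invertible
  have hSdet : S.det ≠ 0 := by
    rw [Matrix.det_of_upperTriangular hSbt]
    refine Finset.prod_ne_zero_iff.2 fun i _ => ?_
    simpa [hS, Matrix.add_apply, Matrix.one_apply, Matrix.smul_apply] using hdiag i
  have hSunit : IsUnit S := (Matrix.isUnit_iff_isUnit_det S).2 (Ne.isUnit hSdet)
  haveI : Invertible S := hSunit.invertible
  -- Q facts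
  have hQQ : Qᴴ * Q = 1 := (Matrix.mem_unitaryGroup_iff'.1 hQ)
  have hQQ' : Q * Qᴴ = 1 := (Matrix.mem_unitaryGroup_iff.1 hQ)
  have hQinv : Q⁻¹ = Qᴴ := Matrix.inv_eq_left_inv hQQ
  have hQHinv : Qᴴ⁻¹ = Q := Matrix.inv_eq_left_inv hQQ'
  -- key factorization: A - ν•E = (A - μ•E) * (Q * S * Qᴴ)
  have hkey : A - ν • E = (A - μ • E) * (Q * S * Qᴴ) := by
    have h1 : (A - μ • E) * ((A - μ • E)⁻¹ * E) = E := by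
      rw [← Matrix.mul_assoc, Matrix.mul_nonsing_inv _ ((Matrix.isUnit_iff_isUnit_det _).1 hμ),
        Matrix.one_mul]
    calc A - ν • E = (A - μ • E) + c • E := by rw [hc]; module
    _ = (A - μ • E) * (1 + c • ((A - μ • E)⁻¹ * E)) := by
        rw [Matrix.mul_add, Matrix.mul_one, Matrix.mul_smul, h1]
    _ = (A - μ • E) * (Q * S * Qᴴ) := by
        rw [hfac, hS]
        congr 1
        rw [Matrix.mul_add, Matrix.mul_one, Matrix.add_mul, hQQ', Matrix.mul_smul,
          Matrix.smul_mul]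
  -- inverse of A - ν•E
  have hQSQinv : (Q * S * Qᴴ)⁻¹ = Q * S⁻¹ * Qᴴ := by
    rw [Matrix.mul_inv_rev, Matrix.mul_inv_rev, hQinv, hQHinv, Matrix.mul_assoc]
  have hνinv : (A - ν • E)⁻¹ = Q * S⁻¹ * Qᴴ * (A - μ • E)⁻¹ := by
    rw [hkey, Matrix.mul_inv_rev, hQSQinv]
  -- main identity
  have hmain : (A - ν • E)⁻¹ * E = Q * (S⁻¹ * T) * Qᴴ := by
    rw [hνinv, Matrix.mul_assoc (Q * S⁻¹ * Qᴴ), hfac]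
    calc Q * S⁻¹ * Qᴴ * (Q * T * Qᴴ) = Q * S⁻¹ * (Qᴴ * Q) * T * Qᴴ := by
          simp only [Matrix.mul_assoc]
    _ = Q * (S⁻¹ * T) * Qᴴ := by rw [hQQ, Matrix.mul_one]; simp only [Matrix.mul_assoc]
  -- commuting: S⁻¹ * T = T * S⁻¹
  have hcomm : S⁻¹ * T = T * S⁻¹ := by
    have hTS : T * S = S * T := by
      rw [hS, Matrix.mul_add, Matrix.add_mul, Matrix.mul_one, Matrix.one_mul,
        Matrix.mul_smul, Matrix.smul_mul]
    calc S⁻¹ * T = S⁻¹ * T * (S * S⁻¹) := by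
          rw [Matrix.mul_nonsing_inv _ ((Matrix.isUnit_iff_isUnit_det _).1 hSunit),
            Matrix.mul_one]
    _ = S⁻¹ * (T * S) * S⁻¹ := by simp only [Matrix.mul_assoc]
    _ = S⁻¹ * S * T * S⁻¹ := by rw [hTS]; simp only [Matrix.mul_assoc]
    _ = T * S⁻¹ := by
          rw [Matrix.nonsing_inv_mul _ ((Matrix.isUnit_iff_isUnit_det _).1 hSunit),
            Matrix.one_mul]
  have hmain' : (A - ν • E)⁻¹ * E = Q * (T * S⁻¹) * Qᴴ := by rw [hmain, hcomm]
  refine ⟨hSunit, ?_, hmain', (hT.mul (blockTriangular_inv_of_blockTriangular hSbt))⟩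
  rw [hmain', Matrix.mul_assoc, Matrix.mul_assoc, hQQ, Matrix.mul_one]
end
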